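/- arXiv:2310.06441 — 5 statements merged into one kernel-verified Lean document; each statement's English description precedes it below -/
import Mathlib

section
/- Let L be a finite complete lattice, E : L → L monotone and extensive, Q : L → L monotone and anti-extensive, with E internal to fp(Q) and Q internal to fp(E). Then every common fixed point x ∈ fp(E) ∩ fp(Q) satisfies lfp(E) ≤ x ≤ gfp(Q); moreover lfp(E) and gfp(Q) themselves belong to fp(E) ∩ fp(Q), so they are the infimum and supremum of the set of common fixed points. -/
/-- Every common fixed point of `E` (monotone extensive) and `Q` (monotone
anti-extensive), each internal to the other's fixed points on a finite complete
lattice, lies between `lfp(E)` and `gfp(Q)`; moreover these two extrema are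
themselves common fixed points. -/
theorem stmt_9 {L : Type*} [CompleteLattice L] [Finite L] (E Q : L → L)
    (hEm : Monotone E) (hEe : ∀ x, x ≤ E x)
    (hQm : Monotone Q) (hQa : ∀ x, Q x ≤ x)
    (hEint : ∀ x, Q x = x → Q (E x) = E x)
    (hQint : ∀ x, E x = x → E (Q x) = Q x) :
    Q (OrderHom.lfp ⟨E, hEm⟩) = OrderHom.lfp ⟨E, hEm⟩ ∧
    E (OrderHom.gfp ⟨Q, hQm⟩) = OrderHom.gfp ⟨Q, hQm⟩ ∧
    ∀ x, E x = x → Q x = x →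
      OrderHom.lfp ⟨E, hEm⟩ ≤ x ∧ x ≤ OrderHom.gfp ⟨Q, hQm⟩ := by
  set a := OrderHom.lfp ⟨E, hEm⟩ with ha
  set b := OrderHom.gfp ⟨Q, hQm⟩ with hb
  have hEa : E a = a := OrderHom.map_lfp ⟨E, hEm⟩
  have hQb : Q b = b := OrderHom.map_gfp ⟨Q, hQm⟩
  have h1 : Q a = a := by
    refine le_antisymm (hQa a) ?_
    exact OrderHom.lfp_le ⟨E, hEm⟩ (le_of_eq (hQint a hEa))
  have h2 : E b = b := by
    refine le_antisymm ?_ (hEe b)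
    exact OrderHom.le_gfp ⟨Q, hQm⟩ (ge_of_eq (hEint b hQb))
  exact ⟨h1, h2, fun x hEx hQx =>
    ⟨OrderHom.lfp_le ⟨E, hEm⟩ (le_of_eq hEx), OrderHom.le_gfp ⟨Q, hQm⟩ (ge_of_eq hQx)⟩⟩
end

section
/- Let L be a finite poset, E monotone extensive and Q monotone anti-extensive on L, with E internal to fp(Q) and Q internal to fp(E). Then the image of the composite Q^∞ ∘ E^∞ equals fp(E) ∩ fp(Q), and likewise the image of E^∞ ∘ Q^∞ equals fp(E) ∩ fp(Q). -/
private lemma iter_fix {L : Type*} (F : L → L) {x : L} (h : F x = x) :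
    ∀ n, F^[n] x = x := by
  intro n
  induction n with
  | zero => rfl
  | succ n ih => rw [Function.iterate_succ_apply', ih, h]

private lemma iter_pres {L : Type*} (F G : L → L)
    (hint : ∀ x, F x = x → F (G x) = G x) {x : L} (h : F x = x) :
    ∀ n, F (G^[n] x) = G^[n] x := by
  intro n
  induction n with
  | zero => exact h
  | succ n ih => rw [Function.iterate_succ_apply']; exact hint _ ih

/-- The image of `Q^∞ ∘ E^∞` (and of `E^∞ ∘ Q^∞`) equals the set of common fixed
points of `E` and `Q`. -/
theorem stmt_10 {L : Type*} [PartialOrder L] [Finite L] (E Q : L → L)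
    (hEm : Monotone E) (hEe : ∀ x, x ≤ E x)
    (hQm : Monotone Q) (hQa : ∀ x, Q x ≤ x)
    (hEint : ∀ x, Q x = x → Q (E x) = E x)
    (hQint : ∀ x, E x = x → E (Q x) = Q x)
    (Einf Qinf : L → L)
    (hEinf : ∀ x, E (Einf x) = Einf x ∧ ∃ n, Einf x = E^[n] x)
    (hQinf : ∀ x, Q (Qinf x) = Qinf x ∧ ∃ n, Qinf x = Q^[n] x) :
    Set.range (Qinf ∘ Einf) = {x | E x = x} ∩ {x | Q x = x} ∧
    Set.range (Einf ∘ Qinf) = {x | E x = x} ∩ {x | Q x = x} := by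
  have hEfix : ∀ x, E x = x → Einf x = x := fun x hx => by
    obtain ⟨n, hn⟩ := (hEinf x).2; rw [hn, iter_fix E hx]
  have hQfix : ∀ x, Q x = x → Qinf x = x := fun x hx => by
    obtain ⟨n, hn⟩ := (hQinf x).2; rw [hn, iter_fix Q hx]
  constructor
  · ext y
    constructor
    · rintro ⟨x, rfl⟩
      refine ⟨?_, (hQinf (Einf x)).1⟩
      obtain ⟨n, hn⟩ := (hQinf (Einf x)).2
      show E _ = _
      simp only [Function.comp_apply, hn]
      exact iter_pres E Q hQint (hEinf x).1 n
    · rintro ⟨hE, hQ⟩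
      exact ⟨y, by simp [Function.comp_apply, hEfix y hE, hQfix y hQ]⟩
  · ext y
    constructor
    · rintro ⟨x, rfl⟩
      refine ⟨(hEinf (Qinf x)).1, ?_⟩
      obtain ⟨n, hn⟩ := (hEinf (Qinf x)).2
      show Q _ = _
      simp only [Function.comp_apply, hn]
      exact iter_pres Q E hEint (hQinf x).1 n
    · rintro ⟨hE, hQ⟩
      exact ⟨y, by simp [Function.comp_apply, hEfix y hE, hQfix y hQ]⟩
end

section
/- Under the same hypotheses (finite poset, E monotone extensive, Q monotone anti-extensive, mutual internality of E and Q on each other's fixed points), the composite map Q^∞ ∘ E^∞ is monotone and idempotent, and similarly for E^∞ ∘ Q^∞. -/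
/-- The composites `Q^∞ ∘ E^∞` and `E^∞ ∘ Q^∞` are monotone and idempotent. -/
theorem stmt_11 {L : Type*} [PartialOrder L] [Finite L] (E Q : L → L)
    (hEm : Monotone E) (hEe : ∀ x, x ≤ E x)
    (hQm : Monotone Q) (hQa : ∀ x, Q x ≤ x)
    (hEint : ∀ x, Q x = x → Q (E x) = E x)
    (hQint : ∀ x, E x = x → E (Q x) = Q x)
    (Einf Qinf : L → L)
    (hEinf : ∀ x, E (Einf x) = Einf x ∧ ∃ n, Einf x = E^[n] x)
    (hQinf : ∀ x, Q (Qinf x) = Qinf x ∧ ∃ n, Qinf x = Q^[n] x) :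
    Monotone (Qinf ∘ Einf) ∧ (Qinf ∘ Einf) ∘ (Qinf ∘ Einf) = Qinf ∘ Einf ∧
    Monotone (Einf ∘ Qinf) ∧ (Einf ∘ Qinf) ∘ (Einf ∘ Qinf) = Einf ∘ Qinf := by
  -- iterates are extensive / anti-extensive
  have hEit : ∀ n x, x ≤ E^[n] x := by
    intro n x
    induction n with
    | zero => simp
    | succ n ih => rw [Function.iterate_succ_apply']; exact le_trans ih (hEe _)
  have hQit : ∀ n x, Q^[n] x ≤ x := by
    intro n x
    induction n with
    | zero => simp
    | succ n ih => rw [Function.iterate_succ_apply']; exact le_trans (hQa _) ih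
  have hEle : ∀ x, x ≤ Einf x := fun x => by
    obtain ⟨-, n, hn⟩ := hEinf x; rw [hn]; exact hEit n x
  have hQle : ∀ x, Qinf x ≤ x := fun x => by
    obtain ⟨-, n, hn⟩ := hQinf x; rw [hn]; exact hQit n x
  -- internality for iterates
  have hEintIt : ∀ n x, Q x = x → Q (E^[n] x) = E^[n] x := by
    intro n x hx
    induction n with
    | zero => simpa using hx
    | succ n ih => rw [Function.iterate_succ_apply']; exact hEint _ ih
  have hQintIt : ∀ n x, E x = x → E (Q^[n] x) = Q^[n] x := by
    intro n x hx
    induction n with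
    | zero => simpa using hx
    | succ n ih => rw [Function.iterate_succ_apply']; exact hQint _ ih
  -- monotonicity of the closures
  have hEinfM : Monotone Einf := by
    intro x y hxy
    obtain ⟨-, n, hn⟩ := hEinf x
    calc Einf x = E^[n] x := hn
      _ ≤ E^[n] (Einf y) := (hEm.iterate n) (le_trans hxy (hEle y))
      _ = Einf y := Function.iterate_fixed (hEinf y).1 n
  have hQinfM : Monotone Qinf := by
    intro x y hxy
    obtain ⟨-, m, hm⟩ := hQinf y
    calc Qinf x = Q^[m] (Qinf x) := (Function.iterate_fixed (hQinf x).1 m).symm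
      _ ≤ Q^[m] y := (hQm.iterate m) (le_trans (hQle x) hxy)
      _ = Qinf y := hm.symm
  -- Qinf (Einf x) is fixed by both E and Q
  have key : ∀ x, E (Qinf (Einf x)) = Qinf (Einf x) ∧ Q (Qinf (Einf x)) = Qinf (Einf x) := by
    intro x
    refine ⟨?_, (hQinf _).1⟩
    obtain ⟨-, n, hn⟩ := hQinf (Einf x)
    rw [hn]; exact hQintIt n _ (hEinf x).1
  have key' : ∀ x, Q (Einf (Qinf x)) = Einf (Qinf x) ∧ E (Einf (Qinf x)) = Einf (Qinf x) := by
    intro x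
    refine ⟨?_, (hEinf _).1⟩
    obtain ⟨-, n, hn⟩ := hEinf (Qinf x)
    rw [hn]; exact hEintIt n _ (hQinf x).1
  have fixE : ∀ x, E x = x → Einf x = x := by
    intro x hx
    obtain ⟨-, n, hn⟩ := hEinf x
    rw [hn, Function.iterate_fixed hx]
  have fixQ : ∀ x, Q x = x → Qinf x = x := by
    intro x hx
    obtain ⟨-, n, hn⟩ := hQinf x
    rw [hn, Function.iterate_fixed hx]
  refine ⟨hQinfM.comp hEinfM, ?_, hEinfM.comp hQinfM, ?_⟩
  · funext x
    obtain ⟨hE, hQ⟩ := key x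
    simp only [Function.comp_apply]
    rw [fixE _ hE, fixQ _ hQ]
  · funext x
    obtain ⟨hQ, hE⟩ := key' x
    simp only [Function.comp_apply]
    rw [fixQ _ hQ, fixE _ hE]
end

section
/- Under the same hypotheses, for every x in fp(E) ∪ fp(Q), the two composites agree: Q^∞(E^∞(x)) = E^∞(Q^∞(x)). In particular, if x ∈ fp(E) then both equal Q^∞(x), and if x ∈ fp(Q) then both equal E^∞(x). -/
/-- On the union `fp(E) ∪ fp(Q)` the two composites agree:
`Q^∞(E^∞ x) = E^∞(Q^∞ x)`; if `x ∈ fp(E)` both are `Q^∞ x`, and if `x ∈ fp(Q)`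
both are `E^∞ x`. -/
theorem stmt_13 {L : Type*} [PartialOrder L] [Finite L] (E Q : L → L)
    (hEm : Monotone E) (hEe : ∀ x, x ≤ E x)
    (hQm : Monotone Q) (hQa : ∀ x, Q x ≤ x)
    (hEint : ∀ x, Q x = x → Q (E x) = E x)
    (hQint : ∀ x, E x = x → E (Q x) = Q x)
    (Einf Qinf : L → L)
    (hEinf : ∀ x, E (Einf x) = Einf x ∧ ∃ n, Einf x = E^[n] x)
    (hQinf : ∀ x, Q (Qinf x) = Qinf x ∧ ∃ n, Qinf x = Q^[n] x) :
    ∀ x, (E x = x ∨ Q x = x) →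
      Qinf (Einf x) = Einf (Qinf x) ∧
      (E x = x → Qinf (Einf x) = Qinf x) ∧
      (Q x = x → Qinf (Einf x) = Einf x) := by
  -- Einf fixes E-fixed points, Qinf fixes Q-fixed points
  have hEfix : ∀ y, E y = y → Einf y = y := by
    intro y hy
    obtain ⟨n, hn⟩ := (hEinf y).2
    rw [hn, Function.iterate_fixed hy]
  have hQfix : ∀ y, Q y = y → Qinf y = y := by
    intro y hy
    obtain ⟨n, hn⟩ := (hQinf y).2
    rw [hn, Function.iterate_fixed hy]
  -- iterates preserve internality
  have hQiter : ∀ (n : ℕ) y, E y = y → E (Q^[n] y) = Q^[n] y := by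
    intro n
    induction n with
    | zero => intro y hy; simpa using hy
    | succ k ih =>
      intro y hy
      rw [Function.iterate_succ_apply']
      exact hQint _ (ih y hy)
  have hEiter : ∀ (n : ℕ) y, Q y = y → Q (E^[n] y) = E^[n] y := by
    intro n
    induction n with
    | zero => intro y hy; simpa using hy
    | succ k ih =>
      intro y hy
      rw [Function.iterate_succ_apply']
      exact hEint _ (ih y hy)
  intro x hx
  have hEcase : E x = x → Qinf (Einf x) = Qinf x ∧ Einf (Qinf x) = Qinf x := by
    intro hE
    constructor
    · rw [hEfix x hE]
    · obtain ⟨n, hn⟩ := (hQinf x).2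
      exact hEfix _ (by rw [hn]; exact hQiter n x hE)
  have hQcase : Q x = x → Qinf (Einf x) = Einf x ∧ Einf (Qinf x) = Einf x := by
    intro hQ
    constructor
    · obtain ⟨n, hn⟩ := (hEinf x).2
      exact hQfix _ (by rw [hn]; exact hEiter n x hQ)
    · rw [hQfix x hQ]
  refine ⟨?_, fun hE => (hEcase hE).1, fun hQ => (hQcase hQ).1⟩
  rcases hx with hE | hQ
  · rw [(hEcase hE).1, (hEcase hE).2]
  · rw [(hQcase hQ).1, (hQcase hQ).2]
end

section
/- Under the same hypotheses, for every x in L (not necessarily a fixed point of either function), E^∞(Q^∞(x)) ≤ Q^∞(E^∞(x)). -/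
/-- For every `x`, `E^∞(Q^∞ x) ≤ Q^∞(E^∞ x)`. -/
theorem stmt_14 {L : Type*} [PartialOrder L] [Finite L] (E Q : L → L)
    (hEm : Monotone E) (hEe : ∀ x, x ≤ E x)
    (hQm : Monotone Q) (hQa : ∀ x, Q x ≤ x)
    (hEint : ∀ x, Q x = x → Q (E x) = E x)
    (hQint : ∀ x, E x = x → E (Q x) = Q x)
    (Einf Qinf : L → L)
    (hEinf : ∀ x, E (Einf x) = Einf x ∧ ∃ n, Einf x = E^[n] x)
    (hQinf : ∀ x, Q (Qinf x) = Qinf x ∧ ∃ n, Qinf x = Q^[n] x) :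
    ∀ x, Einf (Qinf x) ≤ Qinf (Einf x) := by
  intro x
  -- Q^[n] y ≤ y
  have hQiter : ∀ n y, Q^[n] y ≤ y := by
    intro n
    induction n with
    | zero => intro y; simp
    | succ n ih =>
      intro y
      rw [Function.iterate_succ_apply']
      exact (hQa _).trans (ih y)
  -- Qinf(Einf x) is a fixed point of E
  have hEfixQ : ∀ n y, E y = y → E (Q^[n] y) = Q^[n] y := by
    intro n
    induction n with
    | zero => intro y h; simpa using h
    | succ n ih =>
      intro y h
      rw [Function.iterate_succ_apply']
      exact hQint _ (ih y h)
  obtain ⟨hQf, m, hm⟩ := hQinf (Einf x)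
  have hEfix : E (Qinf (Einf x)) = Qinf (Einf x) := by
    rw [hm]; exact hEfixQ m _ (hEinf x).1
  -- Qinf x ≤ Qinf (Einf x)
  have h1 : Qinf x ≤ Qinf (Einf x) := by
    obtain ⟨hQfx, n, hn⟩ := hQinf x
    have hle : Qinf x ≤ Einf x := by
      calc Qinf x ≤ x := by rw [hn]; exact hQiter n x
        _ ≤ Einf x := by
            obtain ⟨_, k, hk⟩ := hEinf x
            have hEiter : ∀ j (y : L), y ≤ E^[j] y := by
              intro j
              induction j with
              | zero => intro y; simp
              | succ j ih =>
                intro y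
                rw [Function.iterate_succ_apply']
                exact (ih y).trans (hEe _)
            rw [hk]; exact hEiter k x
    have : Q^[m] (Qinf x) ≤ Q^[m] (Einf x) := (hQm.iterate m) hle
    rwa [Function.iterate_fixed hQfx m, ← hm] at this
  -- conclude
  obtain ⟨_, k, hk⟩ := hEinf (Qinf x)
  rw [hk]
  calc E^[k] (Qinf x) ≤ E^[k] (Qinf (Einf x)) := (hEm.iterate k) h1
    _ = Qinf (Einf x) := Function.iterate_fixed hEfix k
end
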